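/- Let G be a connected graph (with a loop at every vertex), r ≡ 0 (mod 3), r ≥ 6, diam(G) ≥ r. Let x, y be vertices with d(x,y) ∈ {r, r+1}. If there exists a vertex z with d(z,x) ≥ r−1 and d(z,y) ≥ r−1, then x is sufficient or y is sufficient. -/

import Mathlib

/-- The ball of radius `r` around `v` (the `r`-th neighbourhood `N^r(v)`). -/
def SimpleGraph.ballOfRadius {V : Type*} (G : SimpleGraph V) (r : ℕ) (v : V) : Set V :=
  {u : V | G.dist v u ≤ r}

/-- A vertex is *sufficient* if `|N^r(v)| ≥ (r/3 + 1)·δ`, where `δ = G.minDegree + 1`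
is the minimum degree of the graph with a loop at every vertex. -/
def SimpleGraph.Sufficient {V : Type*} [Fintype V] (G : SimpleGraph V)
    [DecidableRel G.Adj] (r : ℕ) (v : V) : Prop :=
  (r / 3 + 1) * (G.minDegree + 1) ≤ (G.ballOfRadius r v).ncard

/-!
Say `d(z,x) ≤ d(z,y)`; then `x` is sufficient. Along a geodesic from `x` to `z` take the vertices
`u_i` with `d(x,u_i) = 3i + 2` for `i < r/3`, and along a geodesic from `x` to `y` the vertex `w`
with `d(x,w) = r - 1`. These `r/3 + 1` vertices are pairwise at distance at least `3`, so their
closed neighbourhoods, each of size at least `δ`, are disjoint and lie in `N^r(x)`. Distances to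
`x` separate two `u_i`, and `u_i` from `w` unless `d(x,u_i) > r - 4`; then `i ≥ 1` and the
triangle inequality through `z` gives `d(u_i,w) ≥ d(z,y) - d(z,x) + 3i ≥ 3`.
-/

namespace SimpleGraph

variable {V : Type*} {G : SimpleGraph V}

lemma Walk.dist_getVert_of_length_eq_dist {a b : V} {p : G.Walk a b}
    (hp : p.length = G.dist a b) {t : ℕ} (ht : t ≤ p.length) :
    G.dist a (p.getVert t) = t ∧ G.dist (p.getVert t) b = p.length - t := by
  have hfirst : G.dist a (p.getVert t) ≤ t := by
    simpa [Walk.take_length, ht] using dist_le (p.take t)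
  have hrest : G.dist (p.getVert t) b ≤ p.length - t := by
    simpa [Walk.drop_length] using dist_le (p.drop t)
  have := (p.take t).reachable.dist_triangle_left b
  omega

lemma mem_ballOfRadius {r : ℕ} {v u : V} : u ∈ G.ballOfRadius r v ↔ G.dist v u ≤ r :=
  Iff.rfl

lemma Connected.ballOfRadius_subset (hG : G.Connected) {r s : ℕ} {x v : V}
    (h : G.dist x v + s ≤ r) : G.ballOfRadius s v ⊆ G.ballOfRadius r x := by
  intro u hu
  rw [mem_ballOfRadius] at hu ⊢
  have := hG.dist_triangle (u := x) (v := v) (w := u)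
  omega

lemma Connected.disjoint_ballOfRadius (hG : G.Connected) {r s : ℕ} {u v : V}
    (h : r + s < G.dist u v) : Disjoint (G.ballOfRadius r u) (G.ballOfRadius s v) := by
  refine Set.disjoint_left.2 fun a hau hav => ?_
  rw [mem_ballOfRadius] at hau hav
  have := hG.dist_triangle (u := u) (v := a) (w := v)
  rw [dist_comm (u := a)] at this
  omega

lemma minDegree_add_one_le_ncard_ballOfRadius_one [Fintype V] [DecidableRel G.Adj] (v : V) :
    G.minDegree + 1 ≤ (G.ballOfRadius 1 v).ncard := by
  classical
  have hsub : (↑(insert v (G.neighborFinset v)) : Set V) ⊆ G.ballOfRadius 1 v := by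
    intro u hu
    rcases Finset.mem_insert.1 hu with rfl | hadj
    · simp [mem_ballOfRadius]
    · exact (dist_eq_one_iff_adj.2 ((G.mem_neighborFinset v u).1 hadj)).le
  calc G.minDegree + 1 ≤ G.degree v + 1 := Nat.succ_le_succ (G.minDegree_le_degree v)
    _ = (insert v (G.neighborFinset v)).card := by
      rw [Finset.card_insert_of_notMem (G.notMem_neighborFinset_self v), card_neighborFinset_eq_degree]
    _ ≤ (G.ballOfRadius 1 v).ncard := by
      rw [← Set.ncard_coe_finset]
      exact Set.ncard_le_ncard hsub

lemma Connected.card_mul_le_ncard_ballOfRadius [Fintype V] [DecidableRel G.Adj]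
    (hG : G.Connected) {ι : Type*} [Fintype ι] (c : ι → V)
    (hc : Pairwise fun i j => 3 ≤ G.dist (c i) (c j)) {r : ℕ} {x : V}
    (hcx : ∀ i, G.dist x (c i) + 1 ≤ r) :
    Fintype.card ι * (G.minDegree + 1) ≤ (G.ballOfRadius r x).ncard := by
  have hdisj : Pairwise (Function.onFun Disjoint fun i => G.ballOfRadius 1 (c i)) := fun i j hij =>
    hG.disjoint_ballOfRadius (hc hij)
  calc Fintype.card ι * (G.minDegree + 1) = ∑ _i : ι, (G.minDegree + 1) := by simp
    _ ≤ ∑ i, (G.ballOfRadius 1 (c i)).ncard :=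
      Finset.sum_le_sum fun i _ => minDegree_add_one_le_ncard_ballOfRadius_one (c i)
    _ = (⋃ i, G.ballOfRadius 1 (c i)).ncard := by
      rw [Set.ncard_iUnion_of_finite (fun _ => Set.toFinite _) hdisj, finsum_eq_sum_of_fintype]
    _ ≤ (G.ballOfRadius r x).ncard :=
      Set.ncard_le_ncard (Set.iUnion_subset fun i => hG.ballOfRadius_subset (hcx i))

lemma Connected.sufficient_of_dist_le_dist [Fintype V] [DecidableRel G.Adj]
    (hG : G.Connected) {r : ℕ} (hr : 6 ≤ r) {x y z : V}
    (hxy : r - 1 ≤ G.dist x y) (hxy' : G.dist x y ≤ r + 1)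
    (hzx : r - 1 ≤ G.dist z x) (hzxy : G.dist z x ≤ G.dist z y) :
    G.Sufficient r x := by
  obtain ⟨p, hp⟩ := hG.exists_walk_length_eq_dist x z
  obtain ⟨q, hq⟩ := hG.exists_walk_length_eq_dist x y
  obtain ⟨hxw, hwy⟩ := Walk.dist_getVert_of_length_eq_dist hq (t := r - 1) (by omega)
  set w := q.getVert (r - 1)
  set u : Fin (r / 3) → V := fun i => p.getVert (3 * i + 2)
  have hu (i : Fin (r / 3)) :
      G.dist x (u i) = 3 * i + 2 ∧ G.dist (u i) z = p.length - (3 * i + 2) := by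
    have := i.isLt
    refine Walk.dist_getVert_of_length_eq_dist hp ?_
    rw [dist_comm] at hzx
    omega
  have huu {i j : Fin (r / 3)} (hij : i < j) : 3 ≤ G.dist (u i) (u j) := by
    have := hG.dist_triangle (u := x) (v := u i) (w := u j)
    have := (hu i).1
    have := (hu j).1
    have : (i : ℕ) < j := hij
    omega
  have huw (i : Fin (r / 3)) : 3 ≤ G.dist (u i) w := by
    obtain ⟨hxu, huz⟩ := hu i
    have := hG.dist_triangle (u := x) (v := u i) (w := w)
    have := hG.dist_triangle (u := z) (v := w) (w := y)
    have := hG.dist_triangle (u := z) (v := u i) (w := w)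
    rw [dist_comm (u := z) (v := u i)] at this
    rw [dist_comm (u := x)] at hp
    omega
  let c : Option (Fin (r / 3)) → V := fun o => o.elim w u
  have hc : Pairwise fun i j => 3 ≤ G.dist (c i) (c j) := by
    rintro (_ | i) (_ | j) hij
    · exact (hij rfl).elim
    · rw [dist_comm]; exact huw j
    · exact huw i
    · rcases lt_or_gt_of_ne (fun h => hij (congrArg some h)) with h | h
      · exact huu h
      · rw [dist_comm]; exact huu h
  have hcx : ∀ o, G.dist x (c o) + 1 ≤ r := by
    rintro (_ | i)
    · show G.dist x w + 1 ≤ r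
      omega
    · have := i.isLt
      have := (hu i).1
      show G.dist x (u i) + 1 ≤ r
      omega
  simpa [Sufficient] using hG.card_mul_le_ncard_ballOfRadius c hc hcx

end SimpleGraph

theorem edge_growth_far_pair_sufficient_general {V : Type*} [Fintype V]
    (G : SimpleGraph V) [DecidableRel G.Adj] (hG : G.Connected)
    (r : ℕ) (hr : 6 ≤ r)
    (x y : V) (hd : G.dist x y = r ∨ G.dist x y = r + 1)
    (z : V) (hzx : r - 1 ≤ G.dist z x) (hzy : r - 1 ≤ G.dist z y) :
    G.Sufficient r x ∨ G.Sufficient r y := by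
  have hxy : r - 1 ≤ G.dist x y := by omega
  have hxy' : G.dist x y ≤ r + 1 := by omega
  rcases le_total (G.dist z x) (G.dist z y) with h | h
  · exact Or.inl (hG.sufficient_of_dist_le_dist hr hxy hxy' hzx h)
  · rw [SimpleGraph.dist_comm] at hxy hxy'
    exact Or.inr (hG.sufficient_of_dist_le_dist hr hxy hxy' hzy h)

/-- if `r ≡ 0 (mod 3)`, `r ≥ 6`, `diam(G) ≥ r`, `d(x,y) ∈ {r, r+1}` and
some vertex `z` satisfies `d(z,x) ≥ r−1` and `d(z,y) ≥ r−1`, then `x` or `y` is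
sufficient. -/
theorem edge_growth_far_pair_sufficient {V : Type*} [Fintype V]
    (G : SimpleGraph V) [DecidableRel G.Adj] (hG : G.Connected)
    (r : ℕ) (hr3 : r % 3 = 0) (hr : 6 ≤ r)
    (hdiam : ∃ u w : V, r ≤ G.dist u w)
    (x y : V) (hd : G.dist x y = r ∨ G.dist x y = r + 1)
    (z : V) (hzx : r - 1 ≤ G.dist z x) (hzy : r - 1 ≤ G.dist z y) :
    G.Sufficient r x ∨ G.Sufficient r y :=
  edge_growth_far_pair_sufficient_general G hG r hr x y hd z hzx hzy
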